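/- arXiv:2507.18251 — 2 statements merged into one kernel-verified Lean document; each statement's English description precedes it below -/
import Mathlib

section
/- Let k ≥ 3 be an integer, let G = (A ∪ B, E) be a bipartite graph in which every vertex has degree at most k+1, and let I_G and X_G be the associated personalized bi-valued instance and allocation. If an allocation X' Pareto-dominates X_G, then for every agent a ∈ A, either X'_a = (X_G)_a, or the following all hold: a gives away exactly k goods (|(X_G)_a \ X'_a| = k), a receives exactly k+1 goods (|X'_a \ (X_G)_a| = k+1), every good a receives is valued 1 by a, and u_a(X'_a) = u_a((X_G)_a). -/
open Finset
open scoped Classical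

noncomputable section

/-- Additive utility of a bundle: the sum of the values of the single goods in it. -/
def util {α β : Type*} [DecidableEq β] (u : α → β → ℝ) (i : α) (S : Finset β) : ℝ :=
  ∑ g ∈ S, u i g

/-- `X` is an allocation: a partition of the set of goods into (possibly empty) bundles,
one per agent. -/
def IsAllocation {α β : Type*} [DecidableEq β] (X : α → Finset β) : Prop :=
  (∀ g : β, ∃ i, g ∈ X i) ∧ ∀ i j : α, i ≠ j → Disjoint (X i) (X j)

/-- `X'` Pareto-dominates `X` w.r.t. utilities `u`. -/
def ParetoDominates {α β : Type*} [DecidableEq β] (u : α → β → ℝ)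
    (X' X : α → Finset β) : Prop :=
  (∀ i, util u i (X i) ≤ util u i (X' i)) ∧ ∃ j, util u j (X j) < util u j (X' j)

variable {A B : Type*} [Fintype A] [Fintype B] [DecidableEq A] [DecidableEq B]

/-- The goods of the instance `I_G`: one good `g_e` for each edge `e ∈ E` of the bipartite
graph, plus `k+1` filler goods for each vertex `b ∈ B`. -/
abbrev RedGood (E : Finset (A × B)) (k : ℕ) : Type _ :=
  {e : A × B // e ∈ E} ⊕ (B × Fin (k + 1))

/-- The utilities of the instance `I_G`: agent `a ∈ A` values `g_e` at `1 + 1/k` if `a` is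
an endpoint of `e` and at `1` otherwise, and values every filler good at `1`; agent `b ∈ B`
values `g_e` at `1 + (1+ε)/k` if `b` is an endpoint of `e` and at `1` otherwise, and values
every filler good at `1`. -/
def redUtil (E : Finset (A × B)) (k : ℕ) (ε : ℝ) : (A ⊕ B) → RedGood E k → ℝ
  | Sum.inl a, Sum.inl e => if e.val.1 = a then 1 + 1 / (k : ℝ) else 1
  | Sum.inl _, Sum.inr _ => 1
  | Sum.inr b, Sum.inl e => if e.val.2 = b then 1 + (1 + ε) / (k : ℝ) else 1
  | Sum.inr _, Sum.inr _ => 1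

/-- The allocation `X_G`: each agent `a ∈ A` gets the goods `g_e` for the edges `e`
incident to `a`, and each agent `b ∈ B` gets its own `k+1` filler goods. -/
def XG (E : Finset (A × B)) (k : ℕ) : (A ⊕ B) → Finset (RedGood E k)
  | Sum.inl a =>
      Finset.univ.filter (fun g => ∃ e : {e : A × B // e ∈ E}, g = Sum.inl e ∧ e.val.1 = a)
  | Sum.inr b =>
      Finset.univ.filter (fun g => ∃ p : B × Fin (k + 1), g = Sum.inr p ∧ p.1 = b)

/-- `G = (A ∪ B, E)` contains a `k`-regular bipartite subgraph: a nonempty edge set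
`E₁ ⊆ E` such that every vertex incident to an edge of `E₁` is incident to exactly `k`
edges of `E₁`. -/
def HasKRegularSubgraph (E : Finset (A × B)) (k : ℕ) : Prop :=
  ∃ E₁ : Finset (A × B), E₁ ⊆ E ∧ E₁.Nonempty ∧
    (∀ a : A, (E₁.filter (fun e => e.1 = a)).Nonempty →
      (E₁.filter (fun e => e.1 = a)).card = k) ∧
    (∀ b : B, (E₁.filter (fun e => e.2 = b)).Nonempty →
      (E₁.filter (fun e => e.2 = b)).card = k)

/-!
Every good is worth at most `ε / k` more to any agent than to its owner in `X_G`. Summing over the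
`m` goods, a Pareto improvement raises total welfare by at most `m ε / k < 1 / k`, and since nobody
loses, each agent gains less than `1 / k`. An agent `a ∈ A` who gives away `s` goods and receives
`t` goods gains `t - s (1 + 1 / k)`, so `0 ≤ k t - (k + 1) s < 1`, that is `k t = (k + 1) s`. As `k`
and `k + 1` are coprime and `s ≤ k + 1 < 2 k`, either `s = t = 0` or `s = k` and `t = k + 1`.
-/

section Welfare

variable {α β : Type*} [DecidableEq β]

lemma IsAllocation.exists_owner {X : α → Finset β} (hX : IsAllocation X) :
    ∃ o : β → α, ∀ g i, g ∈ X i ↔ o g = i := by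
  choose o ho using hX.1
  refine ⟨o, fun g i => ⟨fun hg => ?_, fun h => h ▸ ho g⟩⟩
  by_contra hne
  exact Finset.disjoint_left.mp (hX.2 _ _ hne) (ho g) hg

lemma sum_util_eq_sum_owner [Fintype α] [Fintype β] (u : α → β → ℝ) {X : α → Finset β}
    {o : β → α} (ho : ∀ g i, g ∈ X i ↔ o g = i) :
    ∑ i, util u i (X i) = ∑ g, u (o g) g := by
  have hX : ∀ i, X i = univ.filter (fun g => o g = i) := fun i => by ext g; simp [ho]
  simp only [util, hX]
  calc ∑ i, ∑ g ∈ univ with o g = i, u i g = ∑ i, ∑ g ∈ univ with o g = i, u (o g) g :=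
        sum_congr rfl fun i _ => sum_congr rfl fun g hg => by rw [(mem_filter.1 hg).2]
    _ = ∑ g, u (o g) g := sum_fiberwise univ o _

lemma util_sub_le_card_mul [Fintype α] [Fintype β] {u : α → β → ℝ} {X X' : α → Finset β}
    {o : β → α} (ho : ∀ g i, g ∈ X i ↔ o g = i) (hX' : IsAllocation X')
    (hle : ∀ i, util u i (X i) ≤ util u i (X' i)) {δ : ℝ} (hδ : ∀ i g, u i g ≤ u (o g) g + δ)
    (j : α) : util u j (X' j) - util u j (X j) ≤ Fintype.card β * δ := by
  obtain ⟨o', ho'⟩ := hX'.exists_owner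
  calc util u j (X' j) - util u j (X j)
      ≤ ∑ i, (util u i (X' i) - util u i (X i)) :=
        single_le_sum (fun i _ => sub_nonneg.2 (hle i)) (mem_univ j)
    _ = ∑ g, (u (o' g) g - u (o g) g) := by
        rw [sum_sub_distrib, sum_sub_distrib, sum_util_eq_sum_owner u ho',
          sum_util_eq_sum_owner u ho]
    _ ≤ ∑ _g : β, δ := sum_le_sum fun g _ => by linarith [hδ (o' g) g]
    _ = Fintype.card β * δ := by simp

end Welfare

lemma Nat.eq_zero_or_of_mul_eq_mul_succ {k s t : ℕ} (hk : 2 ≤ k) (hs : s ≤ k + 1)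
    (h : t * k = s * (k + 1)) : s = 0 ∧ t = 0 ∨ s = k ∧ t = k + 1 := by
  obtain ⟨c, rfl⟩ : k ∣ s :=
    (Nat.coprime_self_add_right.2 (Nat.coprime_one_right k)).dvd_of_dvd_mul_right
      (h ▸ dvd_mul_left k t)
  have hc : c ≤ 1 := by
    by_contra! hc
    nlinarith
  interval_cases c
  · left
    simpa [show k ≠ 0 by omega] using h
  · right
    exact ⟨mul_one k, Nat.eq_of_mul_eq_mul_right (m := k) (by omega) (by rw [h]; ring)⟩

lemma mul_eq_mul_succ_of_sub_mul_mem_Ico {k s t : ℕ} (hk : 0 < k)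
    (h : (t : ℝ) - s * (1 + 1 / k) ∈ Set.Ico 0 (1 / (k : ℝ))) : t * k = s * (k + 1) := by
  obtain ⟨h0, h1⟩ := h
  have hk' : (0 : ℝ) < k := by exact_mod_cast hk
  have hscaled : (t * k : ℝ) - s * (k + 1) = k * ((t : ℝ) - s * (1 + 1 / k)) := by
    field_simp
  have hk1 : (k : ℝ) * (1 / k) = 1 := mul_one_div_cancel hk'.ne'
  have hle : s * (k + 1) ≤ t * k := by exact_mod_cast (by nlinarith : (s * (k + 1) : ℝ) ≤ t * k)
  have hlt : t * k < s * (k + 1) + 1 := by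
    exact_mod_cast (by nlinarith : (t * k : ℝ) < s * (k + 1) + 1)
  omega

lemma mul_lt_one_of_lt_one_div_mul {k m ε : ℝ} (hk : 1 ≤ k) (hm : 0 ≤ m)
    (h : ε < 1 / (k * m)) : m * ε < 1 := by
  rcases hm.eq_or_lt with rfl | hm
  · simp
  · have := (lt_div_iff₀ (by positivity)).1 h
    nlinarith

section Reduction

variable {A B : Type*} [DecidableEq A] [DecidableEq B] {E : Finset (A × B)} {k : ℕ}

def xgOwner : RedGood E k → A ⊕ B
  | Sum.inl e => Sum.inl e.1.1
  | Sum.inr p => Sum.inr p.1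

lemma mem_XG_iff [Fintype B] {g : RedGood E k} {i : A ⊕ B} :
    g ∈ XG E k i ↔ xgOwner g = i := by
  rcases i with a | b <;> rcases g with e | p <;> simp [XG, xgOwner, eq_comm, Prod.ext_iff]

lemma redUtil_le_redUtil_xgOwner_add {ε : ℝ} (hε : 0 ≤ ε) (i : A ⊕ B) (g : RedGood E k) :
    redUtil E k ε i g ≤ redUtil E k ε (xgOwner g) g + ε / k := by
  have h1 : (0 : ℝ) ≤ 1 / k := by positivity
  have h2 : (0 : ℝ) ≤ ε / k := by positivity
  have h3 : (1 + ε) / k = 1 / k + ε / k := add_div _ _ _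
  rcases i with a | b <;> rcases g with e | p <;> simp only [redUtil, xgOwner] <;>
    (try split_ifs) <;> linarith

lemma card_redGood {A B : Type*} [Fintype B] (E : Finset (A × B)) (k : ℕ) :
    Fintype.card (RedGood E k) = E.card + (k + 1) * Fintype.card B := by
  simp [mul_comm]

lemma card_XG_inl [Fintype B] (a : A) :
    (XG E k (Sum.inl a)).card = (E.filter (fun e => e.1 = a)).card := by
  symm
  refine card_bij (fun e he => Sum.inl ⟨e, (mem_filter.1 he).1⟩) (fun e he => ?_) ?_ ?_
  · simp [mem_XG_iff, xgOwner, (mem_filter.1 he).2]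
  · simp
  · rintro (e | p) hg <;> simp only [mem_XG_iff, xgOwner, Sum.inl.injEq, reduceCtorEq] at hg
    exact ⟨e, mem_filter.2 ⟨e.2, hg⟩, rfl⟩

lemma redUtil_inl_apply [Fintype B] (ε : ℝ) (a : A) (g : RedGood E k) :
    redUtil E k ε (Sum.inl a) g = if g ∈ XG E k (Sum.inl a) then 1 + 1 / (k : ℝ) else 1 := by
  rcases g with e | p <;> simp [redUtil, mem_XG_iff, xgOwner]

lemma util_redUtil_inl_sub [Fintype B] (ε : ℝ) (a : A) (P : Finset (RedGood E k)) :
    util (redUtil E k ε) (Sum.inl a) P - util (redUtil E k ε) (Sum.inl a) (XG E k (Sum.inl a))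
      = (P \ XG E k (Sum.inl a)).card - (XG E k (Sum.inl a) \ P).card * (1 + 1 / (k : ℝ)) := by
  have hutil : ∀ Q : Finset (RedGood E k), util (redUtil E k ε) (Sum.inl a) Q
      = (Q \ XG E k (Sum.inl a)).card + (Q ∩ XG E k (Sum.inl a)).card * (1 + 1 / (k : ℝ)) := by
    intro Q
    simp only [util, redUtil_inl_apply, sum_ite, sum_const, nsmul_eq_mul, filter_mem_eq_inter,
      filter_notMem_eq_sdiff, mul_one]
    ring
  have hcard : ((XG E k (Sum.inl a)).card : ℝ)
      = (XG E k (Sum.inl a) ∩ P).card + (XG E k (Sum.inl a) \ P).card := by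
    exact_mod_cast (card_inter_add_card_sdiff _ _).symm
  rw [hutil, hutil, sdiff_self, bot_eq_empty, inter_self, card_empty, inter_comm, hcard]
  push_cast
  ring

end Reduction

theorem paretoImprovement_structure_on_A_general
    (k : ℕ) (hk : 3 ≤ k) (E : Finset (A × B)) (ε : ℝ)
    (hdegA : ∀ a : A, (E.filter (fun e => e.1 = a)).card ≤ k + 1)
    (hε0 : 0 < ε)
    (hε1 : ε < 1 / (k * (E.card + (k + 1) * Fintype.card B)))
    (X' : (A ⊕ B) → Finset (RedGood E k)) (hX' : IsAllocation X')
    (hdom : ParetoDominates (redUtil E k ε) X' (XG E k)) :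
    ∀ a : A,
      X' (Sum.inl a) = XG E k (Sum.inl a) ∨
      ((XG E k (Sum.inl a) \ X' (Sum.inl a)).card = k ∧
        (X' (Sum.inl a) \ XG E k (Sum.inl a)).card = k + 1 ∧
        (∀ g ∈ X' (Sum.inl a) \ XG E k (Sum.inl a), redUtil E k ε (Sum.inl a) g = 1) ∧
        util (redUtil E k ε) (Sum.inl a) (X' (Sum.inl a)) =
          util (redUtil E k ε) (Sum.inl a) (XG E k (Sum.inl a))) := by
  intro a
  have hk0 : (0 : ℝ) < k := by positivity
  have hslack : (E.card + (k + 1) * Fintype.card B : ℝ) * ε < 1 :=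
    mul_lt_one_of_lt_one_div_mul (by norm_cast; omega) (by positivity) hε1
  have hgain := util_sub_le_card_mul (fun g i => mem_XG_iff) hX' hdom.1
    (redUtil_le_redUtil_xgOwner_add hε0.le) (Sum.inl a)
  rw [util_redUtil_inl_sub, card_redGood, mul_div_assoc'] at hgain
  push_cast at hgain
  have hs : (XG E k (Sum.inl a) \ X' (Sum.inl a)).card ≤ k + 1 :=
    (card_le_card sdiff_subset).trans ((card_XG_inl a).trans_le (hdegA a))
  have hnonneg := sub_nonneg.2 (hdom.1 (Sum.inl a))
  rw [util_redUtil_inl_sub] at hnonneg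
  rcases Nat.eq_zero_or_of_mul_eq_mul_succ (by omega) hs (mul_eq_mul_succ_of_sub_mul_mem_Ico
    (by omega) ⟨hnonneg, hgain.trans_lt (div_lt_div_of_pos_right hslack hk0)⟩) with
    ⟨hs0, ht0⟩ | ⟨hsk, htk⟩
  · left
    exact Subset.antisymm (sdiff_eq_empty_iff_subset.1 (card_eq_zero.1 ht0))
      (sdiff_eq_empty_iff_subset.1 (card_eq_zero.1 hs0))
  · right
    refine ⟨hsk, htk, fun g hg => ?_, ?_⟩
    · rw [redUtil_inl_apply, if_neg (mem_sdiff.1 hg).2]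
    · rw [← sub_eq_zero, util_redUtil_inl_sub, hsk, htk]
      field_simp
      push_cast
      ring

/-- If an allocation `X'` Pareto-dominates `X_G`, then every agent `a ∈ A`
either keeps exactly her original bundle, or gives away exactly `k` goods, receives exactly
`k+1` goods all of which she values at `1`, and her utility is unchanged. -/
theorem paretoImprovement_structure_on_A
    (k : ℕ) (hk : 3 ≤ k) (E : Finset (A × B)) (ε : ℝ)
    (hdegA : ∀ a : A, (E.filter (fun e => e.1 = a)).card ≤ k + 1)
    (hdegB : ∀ b : B, (E.filter (fun e => e.2 = b)).card ≤ k + 1)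
    (hε0 : 0 < ε)
    (hε1 : ε < 1 / (k * (E.card + (k + 1) * Fintype.card B)))
    (X' : (A ⊕ B) → Finset (RedGood E k)) (hX' : IsAllocation X')
    (hdom : ParetoDominates (redUtil E k ε) X' (XG E k)) :
    ∀ a : A,
      X' (Sum.inl a) = XG E k (Sum.inl a) ∨
      ((XG E k (Sum.inl a) \ X' (Sum.inl a)).card = k ∧
        (X' (Sum.inl a) \ XG E k (Sum.inl a)).card = k + 1 ∧
        (∀ g ∈ X' (Sum.inl a) \ XG E k (Sum.inl a), redUtil E k ε (Sum.inl a) g = 1) ∧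
        util (redUtil E k ε) (Sum.inl a) (X' (Sum.inl a)) =
          util (redUtil E k ε) (Sum.inl a) (XG E k (Sum.inl a))) :=
  paretoImprovement_structure_on_A_general k hk E ε hdegA hε0 hε1 X' hX' hdom

end
end

section
/- Let k ≥ 3 be an integer, let G = (A ∪ B, E) be a bipartite graph in which every vertex has degree at most k+1, and let I_G and X_G be the associated personalized bi-valued instance and allocation. If an allocation X' Pareto-dominates X_G, then for every agent b ∈ B, either b receives no good that it values at 1 + (1+ε)/k and u_b(X'_b) = u_b((X_G)_b), or the following all hold: b receives exactly k goods each valued 1 + (1+ε)/k by b and receives no other goods, b gives away all k+1 of its filler goods, and u_b(X'_b) − u_b((X_G)_b) = ε. -/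
open Finset
open scoped Classical

noncomputable section

variable {A B : Type*} [Fintype A] [Fintype B] [DecidableEq A] [DecidableEq B]

/-!
No agent loses, so each gain is bounded by the total welfare slack of `X_G`: only edge goods are
worth more to anyone than to their owner under `X_G`, each by at most `ε / k`, so `b` gains at most
`|E| ε / k`. If `b` ends up with `s` goods, `p` of them worth `1 + (1 + ε) / k` to her, then `k`
times her utility is `k s + p + p ε`, and `p ε ≤ |E| ε < 1` forces the integer identity
`k s + p = k (k + 1)`, whose only solutions with `p ≤ s` are `(p, s) = (0, k + 1)` and `(k, k)`.
-/

theorem sum_eq_card_add_card_filter_mul {ι : Type*} (S : Finset ι) (f : ι → ℝ) (c : ℝ)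
    (hf : ∀ i ∈ S, f i = 1 ∨ f i = 1 + c) :
    ∑ i ∈ S, f i = #S + #(S.filter (fun i => f i = 1 + c)) * c := by
  have hsplit : ∀ i ∈ S, f i = 1 + if f i = 1 + c then c else 0 := by
    intro i hi
    split_ifs with h
    · exact h
    · simpa [h] using hf i hi
  rw [sum_congr rfl hsplit, sum_add_distrib, sum_ite, sum_const_zero, sum_const, sum_const,
    nsmul_eq_mul, nsmul_eq_mul, mul_one, add_zero]

theorem eq_of_le_add_of_add_lt {n m : ℕ} {x : ℝ} (hx0 : 0 ≤ x) (hx1 : x < 1)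
    (hle : (m : ℝ) ≤ n + x) (hlt : n + x < m + 1) : n = m := by
  have hnm : (n : ℝ) < m + 1 := by linarith
  have hmn : (m : ℝ) < n + 1 := by linarith
  norm_cast at hnm hmn
  omega

theorem eq_zero_or_eq_of_mul_add_eq {k s p : ℕ} (hk : 0 < k) (hps : p ≤ s)
    (h : k * s + p = k * (k + 1)) : p = 0 ∧ s = k + 1 ∨ p = k ∧ s = k := by
  obtain ⟨d, rfl⟩ : k ∣ p := (Nat.dvd_add_right (dvd_mul_right k s)).1 (h ▸ dvd_mul_right k _)
  have hsd : s + d = k + 1 := Nat.eq_of_mul_eq_mul_left hk (by rw [mul_add]; exact h)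
  rcases d with _ | _ | d
  · omega
  · omega
  · nlinarith

theorem mul_lt_one_of_lt_one_div_mul_s13 {N M k ε : ℝ} (hk : 1 ≤ k) (hM : 0 < M) (hNM : N ≤ M)
    (hε : 0 ≤ ε) (h : ε < 1 / (k * M)) : N * ε < 1 := calc
  N * ε ≤ k * M * ε := by gcongr; exact hNM.trans (le_mul_of_one_le_left hM.le hk)
  _ < 1 := (lt_div_iff₀' (by positivity)).1 h

theorem IsAllocation.sum_sum {α β M : Type*} [Fintype α] [Fintype β] [DecidableEq β]
    [AddCommMonoid M] {X : α → Finset β} (hX : IsAllocation X) (f : β → M) :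
    ∑ i, ∑ g ∈ X i, f g = ∑ g, f g := by
  have hcover : univ.biUnion X = univ :=
    eq_univ_of_forall fun g => mem_biUnion.2 <| (hX.1 g).imp fun i hi => ⟨mem_univ i, hi⟩
  rw [← sum_biUnion fun i _ j _ hij => hX.2 i j hij, hcover]

theorem util_sub_util_le_sum_sub {α β : Type*} [Fintype α] [Fintype β] [DecidableEq β]
    {u : α → β → ℝ} {X X' : α → Finset β} (hX : IsAllocation X) (hX' : IsAllocation X')
    (hle : ∀ i, util u i (X i) ≤ util u i (X' i)) {T W : β → ℝ} (hT : ∀ i g, u i g ≤ T g)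
    (hW : ∀ i, ∀ g ∈ X i, u i g = W g) (j : α) :
    util u j (X' j) - util u j (X j) ≤ ∑ g, (T g - W g) := calc
  util u j (X' j) - util u j (X j) ≤ ∑ i, (util u i (X' i) - util u i (X i)) :=
    single_le_sum (f := fun i => util u i (X' i) - util u i (X i))
      (fun i _ => sub_nonneg.2 (hle i)) (mem_univ j)
  _ ≤ ∑ i, (∑ g ∈ X' i, T g - ∑ g ∈ X i, W g) := by
    gcongr with i
    · exact sum_le_sum fun g _ => hT i g
    · exact (sum_congr rfl (hW i)).ge
  _ = ∑ g, (T g - W g) := by rw [sum_sub_distrib, hX'.sum_sum, hX.sum_sum, sum_sub_distrib]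

section RedInstance

variable {E : Finset (A × B)} {k : ℕ} {ε : ℝ}

omit [Fintype A] in
theorem isAllocation_XG : IsAllocation (XG E k) := by
  refine ⟨?_, ?_⟩
  · rintro (e | p)
    · exact ⟨Sum.inl e.val.1, mem_filter.2 ⟨mem_univ _, e, rfl, rfl⟩⟩
    · exact ⟨Sum.inr p.1, mem_filter.2 ⟨mem_univ _, p, rfl, rfl⟩⟩
  · rintro (a | b) (a' | b') hne <;>
      simp only [XG, disjoint_left, mem_filter, mem_univ, true_and] <;>
      rintro _ ⟨x, rfl, rfl⟩ ⟨y, hxy, hy⟩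
    · cases hxy; exact hne (congrArg Sum.inl hy)
    · cases hxy
    · cases hxy
    · cases hxy; exact hne (congrArg Sum.inr hy)

omit [Fintype A] in
theorem redUtil_inr_of_mem_XG_inr {b b' : B} {g : RedGood E k} (hg : g ∈ XG E k (Sum.inr b')) :
    redUtil E k ε (Sum.inr b) g = 1 := by
  obtain ⟨p, rfl, -⟩ := (mem_filter.1 hg).2
  rfl

omit [Fintype A] in
theorem util_XG_inr (b : B) : util (redUtil E k ε) (Sum.inr b) (XG E k (Sum.inr b)) = k + 1 := by
  have hXG : XG E k (Sum.inr b) =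
      univ.map ⟨fun j => Sum.inr (b, j), fun _ _ h => by simpa using h⟩ := by
    ext g
    simp only [XG, mem_filter, mem_univ, true_and, mem_map]
    constructor
    · rintro ⟨p, rfl, rfl⟩; exact ⟨p.2, rfl⟩
    · rintro ⟨j, rfl⟩; exact ⟨(b, j), rfl, rfl⟩
  rw [util, sum_congr rfl fun g hg => redUtil_inr_of_mem_XG_inr hg, sum_const, hXG, card_map,
    card_univ, Fintype.card_fin, nsmul_eq_mul, mul_one, Nat.cast_succ]

theorem util_sub_util_XG_le (hε : 0 ≤ ε) {X' : (A ⊕ B) → Finset (RedGood E k)}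
    (hX' : IsAllocation X') (hle : ∀ i, util (redUtil E k ε) i (XG E k i) ≤ util (redUtil E k ε) i (X' i))
    (i : A ⊕ B) :
    util (redUtil E k ε) i (X' i) - util (redUtil E k ε) i (XG E k i) ≤ E.card * (ε / k) := by
  have hT : ∀ i g, redUtil E k ε i g ≤ Sum.elim (fun _ => 1 + (1 + ε) / k) 1 g := by
    have h1 : 1 / (k : ℝ) ≤ (1 + ε) / k := by gcongr; linarith
    have h2 : 0 ≤ (1 + ε) / (k : ℝ) := by positivity
    rintro (a | b) (e | p) <;> simp only [redUtil, Sum.elim_inl, Sum.elim_inr, Pi.one_apply] <;>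
      (try split_ifs) <;> linarith
  have hW : ∀ i, ∀ g ∈ XG E k i, redUtil E k ε i g = Sum.elim (fun _ => (1 + 1 / k : ℝ)) 1 g := by
    rintro (a | b) g hg <;> obtain ⟨-, x, rfl, hx⟩ := mem_filter.1 hg
    · simp [redUtil, hx]
    · rfl
  refine (util_sub_util_le_sum_sub isAllocation_XG hX' hle hT hW i).trans_eq ?_
  rw [Fintype.sum_sum_type]
  simp only [Sum.elim_inl, Sum.elim_inr, Pi.one_apply, sub_self, sum_const_zero, add_zero,
    sum_const, card_univ, Fintype.card_coe, nsmul_eq_mul]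
  ring

omit [Fintype A] [Fintype B] in
theorem redUtil_inr_eq_one_or (b : B) (g : RedGood E k) :
    redUtil E k ε (Sum.inr b) g = 1 ∨ redUtil E k ε (Sum.inr b) g = 1 + (1 + ε) / k := by
  rcases g with e | p
  · simp only [redUtil]
    split_ifs
    · exact Or.inr rfl
    · exact Or.inl rfl
  · exact Or.inl rfl

omit [Fintype A] [Fintype B] in
theorem util_inr_eq (b : B) (S : Finset (RedGood E k)) :
    util (redUtil E k ε) (Sum.inr b) S =
      #S + #(S.filter fun g => redUtil E k ε (Sum.inr b) g = 1 + (1 + ε) / k) * ((1 + ε) / k) :=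
  sum_eq_card_add_card_filter_mul S _ _ fun g _ => redUtil_inr_eq_one_or b g

omit [Fintype A] [Fintype B] in
theorem card_filter_redUtil_inr_eq_le (hk : 0 < k) (hε : 0 ≤ ε) (b : B)
    (S : Finset (RedGood E k)) :
    #(S.filter fun g => redUtil E k ε (Sum.inr b) g = 1 + (1 + ε) / k) ≤ E.card := by
  have hsub : (S.filter fun g => redUtil E k ε (Sum.inr b) g = 1 + (1 + ε) / k) ⊆
      univ.map Function.Embedding.inl := by
    rintro (e | p) hg
    · exact mem_map_of_mem _ (mem_univ e)
    · have : 0 < (1 + ε) / (k : ℝ) := by positivity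
      have : (1 : ℝ) = 1 + (1 + ε) / k := (mem_filter.1 hg).2
      linarith
  simpa using card_le_card hsub

omit [Fintype A] [Fintype B] in
theorem mul_card_add_card_filter_eq (hk : 0 < k) (hε : 0 ≤ ε) (hEε : E.card * ε < 1) {b : B}
    {S : Finset (RedGood E k)} (hlo : (k : ℝ) + 1 ≤ util (redUtil E k ε) (Sum.inr b) S)
    (hhi : util (redUtil E k ε) (Sum.inr b) S - (k + 1) ≤ E.card * (ε / k)) :
    k * #S + #(S.filter fun g => redUtil E k ε (Sum.inr b) g = 1 + (1 + ε) / k) = k * (k + 1) := by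
  have hU := util_inr_eq (ε := ε) b S
  set p := #(S.filter fun g => redUtil E k ε (Sum.inr b) g = 1 + (1 + ε) / k)
  have hk' : (0 : ℝ) < k := by exact_mod_cast hk
  have hpE : (p : ℝ) * ε ≤ E.card * ε :=
    mul_le_mul_of_nonneg_right (by exact_mod_cast card_filter_redUtil_inr_eq_le hk hε b S) hε
  have hkU : k * util (redUtil E k ε) (Sum.inr b) S = k * #S + p + p * ε := by
    rw [hU]
    field_simp
    ring
  refine eq_of_le_add_of_add_lt (x := p * ε) (by positivity) (by linarith) ?_ ?_
  · push_cast
    linarith [mul_le_mul_of_nonneg_left hlo hk'.le]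
  · have hkε : (k : ℝ) * (E.card * (ε / k)) = E.card * ε := by field_simp
    push_cast
    linarith [mul_le_mul_of_nonneg_left hhi hk'.le]

end RedInstance

theorem paretoImprovement_structure_on_B_general
    (k : ℕ) (hk : 3 ≤ k) (E : Finset (A × B)) (ε : ℝ)
    (hε0 : 0 < ε)
    (hε1 : ε < 1 / (k * (E.card + (k + 1) * Fintype.card B)))
    (X' : (A ⊕ B) → Finset (RedGood E k)) (hX' : IsAllocation X')
    (hdom : ParetoDominates (redUtil E k ε) X' (XG E k)) :
    ∀ b : B,
      ((∀ g ∈ X' (Sum.inr b) \ XG E k (Sum.inr b),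
          redUtil E k ε (Sum.inr b) g ≠ 1 + (1 + ε) / (k : ℝ)) ∧
        util (redUtil E k ε) (Sum.inr b) (X' (Sum.inr b)) =
          util (redUtil E k ε) (Sum.inr b) (XG E k (Sum.inr b))) ∨
      ((X' (Sum.inr b)).card = k ∧
        (∀ g ∈ X' (Sum.inr b), redUtil E k ε (Sum.inr b) g = 1 + (1 + ε) / (k : ℝ)) ∧
        Disjoint (X' (Sum.inr b)) (XG E k (Sum.inr b)) ∧
        util (redUtil E k ε) (Sum.inr b) (X' (Sum.inr b)) -
          util (redUtil E k ε) (Sum.inr b) (XG E k (Sum.inr b)) = ε) := by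
  intro b
  have hk0 : 0 < k := by omega
  have hEε : (E.card : ℝ) * ε < 1 := by
    have : Nonempty B := ⟨b⟩
    exact mul_lt_one_of_lt_one_div_mul_s13 (by exact_mod_cast hk0) (by positivity)
      (le_add_of_nonneg_right (by positivity)) hε0.le hε1
  have hXGb := util_XG_inr (E := E) (k := k) (ε := ε) b
  have hlo := hdom.1 (Sum.inr b)
  have hhi := util_sub_util_XG_le hε0.le hX' hdom.1 (Sum.inr b)
  rw [hXGb] at hlo hhi
  have hU := util_inr_eq (ε := ε) b (X' (Sum.inr b))
  rcases eq_zero_or_eq_of_mul_add_eq hk0 (card_filter_le _ _)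
      (mul_card_add_card_filter_eq hk0 hε0.le hEε hlo hhi) with ⟨hp, hs⟩ | ⟨hp, hs⟩
  · refine .inl ⟨fun g hg => card_filter_eq_zero_iff.1 hp g (mem_sdiff.1 hg).1, ?_⟩
    rw [hU, hXGb, hp, hs]
    push_cast
    ring
  · have hall := card_filter_eq_iff.1 (hp.trans hs.symm)
    refine .inr ⟨hs, hall, disjoint_left.2 fun g hgS hgXG => ?_, ?_⟩
    · have hhigh : (1 : ℝ) = 1 + (1 + ε) / k :=
        (redUtil_inr_of_mem_XG_inr hgXG).symm.trans (hall g hgS)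
      have : 0 < (1 + ε) / (k : ℝ) := by positivity
      linarith
    · rw [hU, hXGb, hp, hs]
      field_simp
      ring

/-- If an allocation `X'` Pareto-dominates `X_G`, then every agent `b ∈ B`
either receives no good that she values at `1 + (1+ε)/k` and her utility is unchanged, or
she ends up with exactly `k` goods, each valued `1 + (1+ε)/k` by her and nothing else, she
gives away all `k+1` of her filler goods, and her utility increases by exactly `ε`. -/
theorem paretoImprovement_structure_on_B
    (k : ℕ) (hk : 3 ≤ k) (E : Finset (A × B)) (ε : ℝ)
    (hdegA : ∀ a : A, (E.filter (fun e => e.1 = a)).card ≤ k + 1)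
    (hdegB : ∀ b : B, (E.filter (fun e => e.2 = b)).card ≤ k + 1)
    (hε0 : 0 < ε)
    (hε1 : ε < 1 / (k * (E.card + (k + 1) * Fintype.card B)))
    (X' : (A ⊕ B) → Finset (RedGood E k)) (hX' : IsAllocation X')
    (hdom : ParetoDominates (redUtil E k ε) X' (XG E k)) :
    ∀ b : B,
      ((∀ g ∈ X' (Sum.inr b) \ XG E k (Sum.inr b),
          redUtil E k ε (Sum.inr b) g ≠ 1 + (1 + ε) / (k : ℝ)) ∧
        util (redUtil E k ε) (Sum.inr b) (X' (Sum.inr b)) =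
          util (redUtil E k ε) (Sum.inr b) (XG E k (Sum.inr b))) ∨
      ((X' (Sum.inr b)).card = k ∧
        (∀ g ∈ X' (Sum.inr b), redUtil E k ε (Sum.inr b) g = 1 + (1 + ε) / (k : ℝ)) ∧
        Disjoint (X' (Sum.inr b)) (XG E k (Sum.inr b)) ∧
        util (redUtil E k ε) (Sum.inr b) (X' (Sum.inr b)) -
          util (redUtil E k ε) (Sum.inr b) (XG E k (Sum.inr b)) = ε) :=
  paretoImprovement_structure_on_B_general k hk E ε hε0 hε1 X' hX' hdom

end
end
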